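/- arXiv:1111.5175 — 3 statements merged into one kernel-verified Lean document; each statement's English description precedes it below -/
import Mathlib

section
/- If u : ℝ × ℝ → ℝ is a smooth solution of the higher order Camassa–Holm equation u_t − u_{xxt} + u_{xxxxt} + 3 u u_x − 2 u_x u_{xx} − u u_{xxx} + 2 u_x u_{xxxx} + u u_{xxxxx} = 0, then for any s ∈ ℝ the scaled function v(x,t) = e^{−s} · u(x, e^{−s} t) is also a solution. -/
/-- Partial derivative in the first (space) variable `x`. -/
noncomputable def pdx (u : ℝ × ℝ → ℝ) : ℝ × ℝ → ℝ :=
  fun p => deriv (fun x => u (x, p.2)) p.1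

/-- Partial derivative in the second (time) variable `t`. -/
noncomputable def pdt (u : ℝ × ℝ → ℝ) : ℝ × ℝ → ℝ :=
  fun p => deriv (fun t => u (p.1, t)) p.2

/-- The higher order Camassa–Holm operator
`Δ[u] = u_t − u_{xxt} + u_{xxxxt} + 3uu_x − 2u_xu_{xx} − uu_{xxx} + 2u_xu_{xxxx} + uu_{xxxxx}`. -/
noncomputable def CH (u : ℝ × ℝ → ℝ) : ℝ × ℝ → ℝ := fun p =>
  pdt u p - pdx (pdx (pdt u)) p + pdx (pdx (pdx (pdx (pdt u)))) p
    + 3 * u p * pdx u p - 2 * pdx u p * pdx (pdx u) p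
    - u p * pdx (pdx (pdx u)) p
    + 2 * pdx u p * pdx (pdx (pdx (pdx u))) p
    + u p * pdx (pdx (pdx (pdx (pdx u)))) p

lemma contDiff_pdx (u : ℝ × ℝ → ℝ) (hu : ContDiff ℝ (⊤ : ℕ∞) u) : ContDiff ℝ (⊤ : ℕ∞) (pdx u) := by
  have h : pdx u = fun p => fderiv ℝ u p ((1:ℝ),(0:ℝ)) := by
    funext p
    have h1 : HasFDerivAt u (fderiv ℝ u p) p := (hu.differentiable (by simp) p).hasFDerivAt
    have h2 : HasDerivAt (fun x : ℝ => (x, p.2)) ((1:ℝ), (0:ℝ)) p.1 :=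
      (hasDerivAt_id p.1).prodMk (hasDerivAt_const p.1 p.2)
    have h3 : HasDerivAt (fun x => u (x, p.2)) (fderiv ℝ u p ((1:ℝ),(0:ℝ))) p.1 := by
      have := h1.comp_hasDerivAt p.1 (by simpa using h2)
      exact this
    exact h3.deriv
  rw [h]
  exact (hu.fderiv_right (by simp)).clm_apply contDiff_const

lemma contDiff_pdt (u : ℝ × ℝ → ℝ) (hu : ContDiff ℝ (⊤ : ℕ∞) u) : ContDiff ℝ (⊤ : ℕ∞) (pdt u) := by
  have h : pdt u = fun p => fderiv ℝ u p ((0:ℝ),(1:ℝ)) := by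
    funext p
    have h1 : HasFDerivAt u (fderiv ℝ u p) p := (hu.differentiable (by simp) p).hasFDerivAt
    have h2 : HasDerivAt (fun t : ℝ => (p.1, t)) ((0:ℝ), (1:ℝ)) p.2 :=
      (hasDerivAt_const p.2 p.1).prodMk (hasDerivAt_id p.2)
    have h3 : HasDerivAt (fun t => u (p.1, t)) (fderiv ℝ u p ((0:ℝ),(1:ℝ))) p.2 := by
      have := h1.comp_hasDerivAt p.2 (by simpa using h2)
      exact this
    exact h3.deriv
  rw [h]
  exact (hu.fderiv_right (by simp)).clm_apply contDiff_const

lemma pdx_scale (w : ℝ × ℝ → ℝ) (hw : ContDiff ℝ (⊤ : ℕ∞) w) (a c : ℝ) :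
    pdx (fun q => a * w (q.1, c * q.2)) = fun p => a * pdx w (p.1, c * p.2) := by
  funext p
  have hd : DifferentiableAt ℝ (fun x : ℝ => w (x, c * p.2)) p.1 := by
    have : DifferentiableAt ℝ (fun x : ℝ => (x, c * p.2)) p.1 :=
      (differentiableAt_id.prodMk (differentiableAt_const _))
    exact (hw.differentiable (by simp) (p.1, c * p.2)).comp p.1 this
  show deriv (fun x => a * w (x, c * p.2)) p.1 = a * pdx w (p.1, c * p.2)
  rw [deriv_const_mul a hd]
  rfl

lemma pdt_scale (w : ℝ × ℝ → ℝ) (hw : ContDiff ℝ (⊤ : ℕ∞) w) (a c : ℝ) :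
    pdt (fun q => a * w (q.1, c * q.2)) = fun p => (a * c) * pdt w (p.1, c * p.2) := by
  funext p
  have hd : DifferentiableAt ℝ (fun t : ℝ => w (p.1, t)) (c * p.2) := by
    have : DifferentiableAt ℝ (fun t : ℝ => (p.1, t)) (c * p.2) :=
      ((differentiableAt_const _).prodMk differentiableAt_id)
    exact (hw.differentiable (by simp) (p.1, c * p.2)).comp _ this
  have h1 : HasDerivAt (fun t : ℝ => w (p.1, t)) (pdt w (p.1, c * p.2)) (c * p.2) :=
    hd.hasDerivAt
  have h2 : HasDerivAt (fun t : ℝ => c * t) c p.2 := by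
    simpa using (hasDerivAt_id p.2).const_mul c
  have h3 : HasDerivAt (fun t : ℝ => w (p.1, c * t)) (pdt w (p.1, c * p.2) * c) p.2 :=
    h1.comp p.2 h2
  have h4 : HasDerivAt (fun t : ℝ => a * w (p.1, c * t))
      (a * (pdt w (p.1, c * p.2) * c)) p.2 := h3.const_mul a
  show deriv (fun t => a * w (p.1, c * t)) p.2 = (a * c) * pdt w (p.1, c * p.2)
  rw [h4.deriv]; ring

/-- The scaling `v(x,t) = e^{-s} u(x, e^{-s} t)` maps solutions of the higher order
Camassa–Holm equation to solutions (action of `G₃` generated by `v₃ = t∂_t − u∂_u`). -/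
theorem CH_scaling (u : ℝ × ℝ → ℝ) (hu : ContDiff ℝ (⊤ : ℕ∞) u)
    (hsol : ∀ p : ℝ × ℝ, CH u p = 0) (s : ℝ) :
    ∀ p : ℝ × ℝ, CH (fun q => Real.exp (-s) * u (q.1, Real.exp (-s) * q.2)) p = 0 := by
  intro p
  set c := Real.exp (-s) with hc
  -- smoothness of iterated derivatives
  have hx1 := contDiff_pdx u hu
  have hx2 := contDiff_pdx _ hx1
  have hx3 := contDiff_pdx _ hx2
  have hx4 := contDiff_pdx _ hx3
  have ht := contDiff_pdt u hu
  have htx1 := contDiff_pdx _ ht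
  have htx2 := contDiff_pdx _ htx1
  have htx3 := contDiff_pdx _ htx2
  set v : ℝ × ℝ → ℝ := fun q => c * u (q.1, c * q.2) with hv
  -- spatial derivatives of v
  have f1 : pdx v = fun p => c * pdx u (p.1, c * p.2) := pdx_scale u hu c c
  have f2 : pdx (pdx v) = fun p => c * pdx (pdx u) (p.1, c * p.2) := by
    rw [f1]; exact pdx_scale _ hx1 c c
  have f3 : pdx (pdx (pdx v)) = fun p => c * pdx (pdx (pdx u)) (p.1, c * p.2) := by
    rw [f2]; exact pdx_scale _ hx2 c c
  have f4 : pdx (pdx (pdx (pdx v))) = fun p => c * pdx (pdx (pdx (pdx u))) (p.1, c * p.2) := by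
    rw [f3]; exact pdx_scale _ hx3 c c
  have f5 : pdx (pdx (pdx (pdx (pdx v)))) =
      fun p => c * pdx (pdx (pdx (pdx (pdx u)))) (p.1, c * p.2) := by
    rw [f4]; exact pdx_scale _ hx4 c c
  -- time derivative and its spatial derivatives
  have g0 : pdt v = fun p => (c * c) * pdt u (p.1, c * p.2) := pdt_scale u hu c c
  have g1 : pdx (pdt v) = fun p => (c * c) * pdx (pdt u) (p.1, c * p.2) := by
    rw [g0]; exact pdx_scale _ ht (c * c) c
  have g2 : pdx (pdx (pdt v)) = fun p => (c * c) * pdx (pdx (pdt u)) (p.1, c * p.2) := by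
    rw [g1]; exact pdx_scale _ htx1 (c * c) c
  have g3 : pdx (pdx (pdx (pdt v))) =
      fun p => (c * c) * pdx (pdx (pdx (pdt u))) (p.1, c * p.2) := by
    rw [g2]; exact pdx_scale _ htx2 (c * c) c
  have g4 : pdx (pdx (pdx (pdx (pdt v)))) =
      fun p => (c * c) * pdx (pdx (pdx (pdx (pdt u)))) (p.1, c * p.2) := by
    rw [g3]; exact pdx_scale _ htx3 (c * c) c
  have hs := hsol (p.1, c * p.2)
  show CH v p = 0
  unfold CH at hs ⊢
  rw [g4, g2, g0, f5, f4, f3, f2, f1]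
  simp only [hv]
  linear_combination (c * c) * hs
end

section
/- For any smooth solution u of the higher order Camassa–Holm equation, the local conservation law D_x( u³ + u² u_{xxxx} − (2/3)u u_{xt} + (1/3)u_x u_t − u² u_{xx} + (4/5)u u_{xxxt} − (1/5)u_{xxx} u_t − (3/5)u_x u_{xxt} + (2/5)u_{xx} u_{xt} ) + D_t( (1/2)u² − (1/3)u u_{xx} + (1/6)u_x² + (1/5)u u_{xxxx} − (1/5)u_x u_{xxx} + (1/10)u_{xx}² ) = 0 holds pointwise. -/
/-- Flux `Φ` of the conservation law with multiplier `Λ = u`. -/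
noncomputable def Phi2 (u : ℝ × ℝ → ℝ) : ℝ × ℝ → ℝ := fun q =>
  (u q)^3 + (u q)^2 * pdx (pdx (pdx (pdx u))) q
    - (2/3) * u q * pdx (pdt u) q + (1/3) * pdx u q * pdt u q
    - (u q)^2 * pdx (pdx u) q + (4/5) * u q * pdx (pdx (pdx (pdt u))) q
    - (1/5) * pdx (pdx (pdx u)) q * pdt u q
    - (3/5) * pdx u q * pdx (pdx (pdt u)) q
    + (2/5) * pdx (pdx u) q * pdx (pdt u) q

/-- Density `Ψ` of the conservation law with multiplier `Λ = u`. -/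
noncomputable def Psi2 (u : ℝ × ℝ → ℝ) : ℝ × ℝ → ℝ := fun q =>
  (1/2) * (u q)^2 - (1/3) * u q * pdx (pdx u) q + (1/6) * (pdx u q)^2
    + (1/5) * u q * pdx (pdx (pdx (pdx u))) q
    - (1/5) * pdx u q * pdx (pdx (pdx u)) q
    + (1/10) * (pdx (pdx u) q)^2

lemma contDiff_slice_x (f : ℝ × ℝ → ℝ) (hf : ContDiff ℝ (⊤ : ℕ∞) f) (t : ℝ) :
    ContDiff ℝ (⊤ : ℕ∞) (fun x => f (x, t)) :=
  hf.comp (contDiff_id.prodMk contDiff_const)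

lemma contDiff_slice_t (f : ℝ × ℝ → ℝ) (hf : ContDiff ℝ (⊤ : ℕ∞) f) (x : ℝ) :
    ContDiff ℝ (⊤ : ℕ∞) (fun t => f (x, t)) :=
  hf.comp (contDiff_const.prodMk contDiff_id)

lemma hasDerivAt_pdx (f : ℝ × ℝ → ℝ) (hf : ContDiff ℝ (⊤ : ℕ∞) f) (p : ℝ × ℝ) :
    HasDerivAt (fun x => f (x, p.2)) (pdx f p) p.1 :=
  ((contDiff_slice_x f hf p.2).differentiable (by simp) p.1).hasDerivAt

lemma hasDerivAt_pdt (f : ℝ × ℝ → ℝ) (hf : ContDiff ℝ (⊤ : ℕ∞) f) (p : ℝ × ℝ) :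
    HasDerivAt (fun t => f (p.1, t)) (pdt f p) p.2 :=
  ((contDiff_slice_t f hf p.1).differentiable (by simp) p.2).hasDerivAt

lemma pdx_fderiv (f : ℝ × ℝ → ℝ) (hf : ContDiff ℝ (⊤ : ℕ∞) f) (p : ℝ × ℝ) :
    pdx f p = fderiv ℝ f p (1, 0) := by
  have h : HasDerivAt (fun x => f (x, p.2)) (fderiv ℝ f p (1, 0)) p.1 := by
    have hg : HasDerivAt (fun x : ℝ => (x, p.2)) ((1 : ℝ), (0 : ℝ)) p.1 :=
      (hasDerivAt_id p.1).prodMk (hasDerivAt_const p.1 p.2)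
    have hfd : HasFDerivAt f (fderiv ℝ f p) ((p.1, p.2) : ℝ × ℝ) := by
      rw [Prod.mk.eta]; exact (hf.differentiable (by simp) p).hasFDerivAt
    exact hfd.comp_hasDerivAt p.1 hg
  exact h.deriv

lemma pdt_fderiv (f : ℝ × ℝ → ℝ) (hf : ContDiff ℝ (⊤ : ℕ∞) f) (p : ℝ × ℝ) :
    pdt f p = fderiv ℝ f p (0, 1) := by
  have h : HasDerivAt (fun t => f (p.1, t)) (fderiv ℝ f p (0, 1)) p.2 := by
    have hg : HasDerivAt (fun t : ℝ => (p.1, t)) ((0 : ℝ), (1 : ℝ)) p.2 :=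
      (hasDerivAt_const p.2 p.1).prodMk (hasDerivAt_id p.2)
    have hfd : HasFDerivAt f (fderiv ℝ f p) ((p.1, p.2) : ℝ × ℝ) := by
      rw [Prod.mk.eta]; exact (hf.differentiable (by simp) p).hasFDerivAt
    exact hfd.comp_hasDerivAt p.2 hg
  exact h.deriv

lemma contDiff_fderiv (f : ℝ × ℝ → ℝ) (hf : ContDiff ℝ (⊤ : ℕ∞) f) :
    ContDiff ℝ (⊤ : ℕ∞) (fderiv ℝ f) :=
  hf.fderiv_right (by simp)

lemma contDiff_pdx_s4 (f : ℝ × ℝ → ℝ) (hf : ContDiff ℝ (⊤ : ℕ∞) f) : ContDiff ℝ (⊤ : ℕ∞) (pdx f) := by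
  have h : ContDiff ℝ (⊤ : ℕ∞) (fun p => fderiv ℝ f p ((1 : ℝ), (0 : ℝ))) :=
    (contDiff_fderiv f hf).clm_apply contDiff_const
  rw [show pdx f = _ from funext (pdx_fderiv f hf)]; exact h

lemma contDiff_pdt_s4 (f : ℝ × ℝ → ℝ) (hf : ContDiff ℝ (⊤ : ℕ∞) f) : ContDiff ℝ (⊤ : ℕ∞) (pdt f) := by
  have h : ContDiff ℝ (⊤ : ℕ∞) (fun p => fderiv ℝ f p ((0 : ℝ), (1 : ℝ))) :=
    (contDiff_fderiv f hf).clm_apply contDiff_const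
  rw [show pdt f = _ from funext (pdt_fderiv f hf)]; exact h

lemma fderiv_apply_const (f : ℝ × ℝ → ℝ) (hf : ContDiff ℝ (⊤ : ℕ∞) f) (v w : ℝ × ℝ) (p : ℝ × ℝ) :
    fderiv ℝ (fun q => fderiv ℝ f q v) p w = fderiv ℝ (fderiv ℝ f) p w v := by
  rw [fderiv_clm_apply ((contDiff_fderiv f hf).differentiable (by simp) p)
    (differentiableAt_const v)]
  simp

lemma pdx_pdt_comm (f : ℝ × ℝ → ℝ) (hf : ContDiff ℝ (⊤ : ℕ∞) f) (p : ℝ × ℝ) :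
    pdt (pdx f) p = pdx (pdt f) p := by
  have hsym : IsSymmSndFDerivAt ℝ f p :=
    hf.contDiffAt.isSymmSndFDerivAt (by simp [minSmoothness_of_isRCLikeNormedField]; exact WithTop.coe_le_coe.mpr (le_top : (2 : ℕ∞) ≤ ⊤))
  have h1 : pdt (pdx f) p = fderiv ℝ (fderiv ℝ f) p (0, 1) (1, 0) := by
    rw [pdt_fderiv (pdx f) (contDiff_pdx_s4 f hf) p]
    have : pdx f = fun q => fderiv ℝ f q (1, 0) := funext (pdx_fderiv f hf)
    rw [this, fderiv_apply_const f hf _ _ p]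
  have h2 : pdx (pdt f) p = fderiv ℝ (fderiv ℝ f) p (1, 0) (0, 1) := by
    rw [pdx_fderiv (pdt f) (contDiff_pdt_s4 f hf) p]
    have : pdt f = fun q => fderiv ℝ f q (0, 1) := funext (pdt_fderiv f hf)
    rw [this, fderiv_apply_const f hf _ _ p]
  rw [h1, h2, hsym (0,1) (1,0)]

/-- Conservation law of the higher order Camassa–Holm equation from the multiplier `Λ = u`:
`D_x Φ + D_t Ψ = 0` on solutions. -/
theorem CH_conservation_law_multiplier_u (u : ℝ × ℝ → ℝ) (hu : ContDiff ℝ (⊤ : ℕ∞) u)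
    (hsol : ∀ p : ℝ × ℝ, CH u p = 0) :
    ∀ p : ℝ × ℝ, pdx (Phi2 u) p + pdt (Psi2 u) p = 0 := by
  intro p
  have h1 : ContDiff ℝ (⊤ : ℕ∞) (pdx (u)) := contDiff_pdx_s4 u hu
  have h2 : ContDiff ℝ (⊤ : ℕ∞) (pdx (pdx (u))) := contDiff_pdx_s4 _ h1
  have h3 : ContDiff ℝ (⊤ : ℕ∞) (pdx (pdx (pdx (u)))) := contDiff_pdx_s4 _ h2
  have h4 : ContDiff ℝ (⊤ : ℕ∞) (pdx (pdx (pdx (pdx (u))))) := contDiff_pdx_s4 _ h3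
  have hv0 : ContDiff ℝ (⊤ : ℕ∞) (pdt u) := contDiff_pdt_s4 u hu
  have hv1 : ContDiff ℝ (⊤ : ℕ∞) (pdx (pdt u)) := contDiff_pdx_s4 _ hv0
  have hv2 : ContDiff ℝ (⊤ : ℕ∞) (pdx (pdx (pdt u))) := contDiff_pdx_s4 _ hv1
  have hv3 : ContDiff ℝ (⊤ : ℕ∞) (pdx (pdx (pdx (pdt u)))) := contDiff_pdx_s4 _ hv2
  have d0 := hasDerivAt_pdx u hu p
  have d1 := hasDerivAt_pdx _ h1 p
  have d2 := hasDerivAt_pdx _ h2 p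
  have d3 := hasDerivAt_pdx _ h3 p
  have d4 := hasDerivAt_pdx _ h4 p
  have e0 := hasDerivAt_pdx _ hv0 p
  have e1 := hasDerivAt_pdx _ hv1 p
  have e2 := hasDerivAt_pdx _ hv2 p
  have e3 := hasDerivAt_pdx _ hv3 p
  have t0 := hasDerivAt_pdt u hu p
  have t1 := hasDerivAt_pdt _ h1 p
  have t2 := hasDerivAt_pdt _ h2 p
  have t3 := hasDerivAt_pdt _ h3 p
  have t4 := hasDerivAt_pdt _ h4 p
  have hPhi : HasDerivAt (fun x => Phi2 u (x, p.2))
      (3 * u p ^ 2 * pdx (u) p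
      + (2 * u p * pdx (u) p * pdx (pdx (pdx (pdx (u)))) p + u p ^ 2 * pdx (pdx (pdx (pdx (pdx (u))))) p)
      - (2/3) * (pdx (u) p * pdx (pdt u) p + u p * pdx (pdx (pdt u)) p)
      + (1/3) * (pdx (pdx (u)) p * pdt u p + pdx (u) p * pdx (pdt u) p)
      - (2 * u p * pdx (u) p * pdx (pdx (u)) p + u p ^ 2 * pdx (pdx (pdx (u))) p)
      + (4/5) * (pdx (u) p * pdx (pdx (pdx (pdt u))) p + u p * pdx (pdx (pdx (pdx (pdt u)))) p)
      - (1/5) * (pdx (pdx (pdx (pdx (u)))) p * pdt u p + pdx (pdx (pdx (u))) p * pdx (pdt u) p)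
      - (3/5) * (pdx (pdx (u)) p * pdx (pdx (pdt u)) p + pdx (u) p * pdx (pdx (pdx (pdt u))) p)
      + (2/5) * (pdx (pdx (pdx (u))) p * pdx (pdt u) p + pdx (pdx (u)) p * pdx (pdx (pdt u)) p)) p.1 :=
    (((((((((d0.pow 3).add ((d0.pow 2).mul d4)).sub
      ((d0.const_mul ((2:ℝ)/3)).mul e1)).add
      ((d1.const_mul ((1:ℝ)/3)).mul e0)).sub
      ((d0.pow 2).mul d2)).add
      ((d0.const_mul ((4:ℝ)/5)).mul e3)).sub
      ((d3.const_mul ((1:ℝ)/5)).mul e0)).sub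
      ((d1.const_mul ((3:ℝ)/5)).mul e2)).add
      ((d2.const_mul ((2:ℝ)/5)).mul e1)).congr_deriv (by simp only [Prod.mk.eta, Pi.pow_apply]; ring)
  have hPsi : HasDerivAt (fun t => Psi2 u (p.1, t))
      (u p * pdt u p
      - (1/3) * (pdt u p * pdx (pdx (u)) p + u p * pdt (pdx (pdx (u))) p)
      + (1/6) * (2 * pdx (u) p * pdt (pdx (u)) p)
      + (1/5) * (pdt u p * pdx (pdx (pdx (pdx (u)))) p + u p * pdt (pdx (pdx (pdx (pdx (u))))) p)
      - (1/5) * (pdt (pdx (u)) p * pdx (pdx (pdx (u))) p + pdx (u) p * pdt (pdx (pdx (pdx (u)))) p)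
      + (1/10) * (2 * pdx (pdx (u)) p * pdt (pdx (pdx (u))) p)) p.2 :=
    (((((((t0.pow 2).const_mul ((1:ℝ)/2)).sub
      ((t0.const_mul ((1:ℝ)/3)).mul t2)).add
      ((t1.pow 2).const_mul ((1:ℝ)/6))).add
      ((t0.const_mul ((1:ℝ)/5)).mul t4)).sub
      ((t1.const_mul ((1:ℝ)/5)).mul t3)).add
      ((t2.pow 2).const_mul ((1:ℝ)/10))).congr_deriv (by simp only [Prod.mk.eta]; ring)
  have ePhi : pdx (Phi2 u) p = _ := hPhi.deriv
  have ePsi : pdt (Psi2 u) p = _ := hPsi.deriv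
  have c1 : pdt (pdx (u)) = pdx (pdt u) := funext (pdx_pdt_comm u hu)
  have c2 : pdt (pdx (pdx (u))) = pdx (pdx (pdt u)) := by
    have h := funext (pdx_pdt_comm _ h1)
    rw [c1] at h; exact h
  have c3 : pdt (pdx (pdx (pdx (u)))) = pdx (pdx (pdx (pdt u))) := by
    have h := funext (pdx_pdt_comm _ h2)
    rw [c2] at h; exact h
  have c4 : pdt (pdx (pdx (pdx (pdx (u))))) = pdx (pdx (pdx (pdx (pdt u)))) := by
    have h := funext (pdx_pdt_comm _ h3)
    rw [c3] at h; exact h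
  rw [c1, c2, c3, c4] at ePsi
  have hs := hsol p
  simp only [CH] at hs
  rw [ePhi, ePsi]
  linear_combination u p * hs
end

section
/- Let v : ℝ → ℝ be smooth and define u(x,t) = (1/t)·v(x − log t) for t > 0. Then u solves the higher order Camassa–Holm equation on ℝ × (0,∞) if and only if v satisfies the ODE −v − v' + v'' + v''' − v⁽⁴⁾ − v⁽⁵⁾ + 3 v v' − 2 v' v'' − v v''' + 2 v' v⁽⁴⁾ + v v⁽⁵⁾ = 0 at every point of the range of y = x − log t. -/
/-- Scaling ansatz. -/
noncomputable def Afun (g : ℝ → ℝ) : ℝ × ℝ → ℝ := fun p => (1 / p.2) * g (p.1 - Real.log p.2)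

/-- Time-derivative shape. -/
noncomputable def Bfun (g : ℝ → ℝ) : ℝ × ℝ → ℝ :=
  fun p => -(1 / p.2 ^ 2) * g (p.1 - Real.log p.2)

lemma pdx_Afun (g : ℝ → ℝ) (hg : Differentiable ℝ g) :
    pdx (Afun g) = Afun (deriv g) := by
  funext p
  have hdiff : DifferentiableAt ℝ (fun x : ℝ => g (x - Real.log p.2)) p.1 :=
    (hg _).comp _ (differentiableAt_id.sub_const _)
  simp only [pdx, Afun]
  rw [deriv_const_mul _ hdiff, deriv_comp_sub_const]

lemma pdx_Bfun (g : ℝ → ℝ) (hg : Differentiable ℝ g) :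
    pdx (Bfun g) = Bfun (deriv g) := by
  funext p
  have hdiff : DifferentiableAt ℝ (fun x : ℝ => g (x - Real.log p.2)) p.1 :=
    (hg _).comp _ (differentiableAt_id.sub_const _)
  simp only [pdx, Bfun]
  rw [deriv_const_mul _ hdiff, deriv_comp_sub_const]

lemma pdt_Afun (g : ℝ → ℝ) (hg : Differentiable ℝ g) (p : ℝ × ℝ) (hp : p.2 ≠ 0) :
    pdt (Afun g) p = Bfun (fun y => g y + deriv g y) p := by
  obtain ⟨x, t⟩ := p
  simp only at hp
  have h1 : HasDerivAt (fun s : ℝ => 1 / s) (-(1 / t ^ 2)) t := by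
    simpa [one_div] using hasDerivAt_inv hp
  have h2 : HasDerivAt (fun s : ℝ => x - Real.log s) (-t⁻¹) t :=
    (Real.hasDerivAt_log hp).const_sub x
  have h3 : HasDerivAt (fun s : ℝ => g (x - Real.log s))
      (deriv g (x - Real.log t) * -t⁻¹) t :=
    ((hg _).hasDerivAt).comp t h2
  have h4 := h1.mul h3
  simp only [pdt, Bfun, Afun]
  rw [show (fun s : ℝ => 1 / s * g (x - Real.log s)) = ((fun s : ℝ => 1 / s) * fun s => g (x - Real.log s)) from rfl, h4.deriv]
  field_simp
  ring

lemma pdx_line (f g : ℝ × ℝ → ℝ) (t : ℝ) (h : ∀ x, f (x, t) = g (x, t)) :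
    ∀ x, pdx f (x, t) = pdx g (x, t) := by
  intro x
  simp only [pdx]
  congr 1
  exact funext h

/-- Symmetry reduction by `v₁ + v₃`: `u(x,t) = (1/t)·v(x − log t)` solves the higher
order Camassa–Holm equation on `ℝ × (0,∞)` iff `v` satisfies
`−v − v' + v'' + v''' − v⁽⁴⁾ − v⁽⁵⁾ + 3vv' − 2v'v'' − vv''' + 2v'v⁽⁴⁾ + vv⁽⁵⁾ = 0`. -/
theorem CH_scaling_reduction (v : ℝ → ℝ) (hv : ContDiff ℝ (⊤ : ℕ∞) v) :
    (∀ p : ℝ × ℝ, 0 < p.2 → CH (fun q => (1 / q.2) * v (q.1 - Real.log q.2)) p = 0) ↔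
      (∀ y : ℝ,
        -v y - iteratedDeriv 1 v y + iteratedDeriv 2 v y + iteratedDeriv 3 v y
          - iteratedDeriv 4 v y - iteratedDeriv 5 v y
          + 3 * v y * iteratedDeriv 1 v y - 2 * iteratedDeriv 1 v y * iteratedDeriv 2 v y
          - v y * iteratedDeriv 3 v y + 2 * iteratedDeriv 1 v y * iteratedDeriv 4 v y
          + v y * iteratedDeriv 5 v y = 0) := by
  have hv' : ContDiff ℝ (⊤ : ℕ∞) v := hv.of_le (by simp)
  have hk : ∀ k : ℕ, Differentiable ℝ (iteratedDeriv k v) := by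
    intro k
    rw [iteratedDeriv_eq_iterate]
    exact (hv'.iterate_deriv k).differentiable (by simp)
  -- the iterated spatial derivatives of the ansatz
  have hAx : ∀ k : ℕ, pdx (Afun (iteratedDeriv k v)) = Afun (iteratedDeriv (k + 1) v) := by
    intro k
    rw [pdx_Afun _ (hk k), ← iteratedDeriv_succ]
  -- the shifted family for the time derivative
  set W : ℕ → ℝ → ℝ := fun k y => iteratedDeriv k v y + iteratedDeriv (k + 1) v y with hW
  have hWdiff : ∀ k, Differentiable ℝ (W k) := fun k => (hk k).add (hk (k + 1))
  have hWderiv : ∀ k, deriv (W k) = W (k + 1) := by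
    intro k
    funext y
    rw [hW]
    simp only
    rw [deriv_fun_add ((hk k) y) ((hk (k + 1)) y), ← iteratedDeriv_succ, ← iteratedDeriv_succ]
  have hBx : ∀ k : ℕ, pdx (Bfun (W k)) = Bfun (W (k + 1)) := by
    intro k
    rw [pdx_Bfun _ (hWdiff k), hWderiv k]
  have hv0 : (fun y => v y + deriv v y) = W 0 := by
    funext y
    simp [hW, iteratedDeriv_zero, iteratedDeriv_one]
  -- formula for CH of the ansatz
  have key : ∀ p : ℝ × ℝ, p.2 ≠ 0 →
      CH (Afun v) p = (1 / p.2 ^ 2) *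
        (-v (p.1 - Real.log p.2) - iteratedDeriv 1 v (p.1 - Real.log p.2)
          + iteratedDeriv 2 v (p.1 - Real.log p.2) + iteratedDeriv 3 v (p.1 - Real.log p.2)
          - iteratedDeriv 4 v (p.1 - Real.log p.2) - iteratedDeriv 5 v (p.1 - Real.log p.2)
          + 3 * v (p.1 - Real.log p.2) * iteratedDeriv 1 v (p.1 - Real.log p.2)
          - 2 * iteratedDeriv 1 v (p.1 - Real.log p.2) * iteratedDeriv 2 v (p.1 - Real.log p.2)
          - v (p.1 - Real.log p.2) * iteratedDeriv 3 v (p.1 - Real.log p.2)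
          + 2 * iteratedDeriv 1 v (p.1 - Real.log p.2) * iteratedDeriv 4 v (p.1 - Real.log p.2)
          + v (p.1 - Real.log p.2) * iteratedDeriv 5 v (p.1 - Real.log p.2)) := by
    intro p hp
    obtain ⟨x, t⟩ := p
    simp only at hp
    have hA0 : Afun v = Afun (iteratedDeriv 0 v) := by rw [iteratedDeriv_zero]
    -- spatial derivatives
    have hx1 : pdx (Afun v) = Afun (iteratedDeriv 1 v) := by rw [hA0, hAx 0]
    have hx2 : pdx (pdx (Afun v)) = Afun (iteratedDeriv 2 v) := by rw [hx1, hAx 1]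
    have hx3 : pdx (pdx (pdx (Afun v))) = Afun (iteratedDeriv 3 v) := by rw [hx2, hAx 2]
    have hx4 : pdx (pdx (pdx (pdx (Afun v)))) = Afun (iteratedDeriv 4 v) := by rw [hx3, hAx 3]
    have hx5 : pdx (pdx (pdx (pdx (pdx (Afun v))))) = Afun (iteratedDeriv 5 v) := by
      rw [hx4, hAx 4]
    -- time derivative along the line t = const
    have ht0 : ∀ x', pdt (Afun v) (x', t) = Bfun (W 0) (x', t) := by
      intro x'
      rw [pdt_Afun v (hv'.differentiable (by simp)) (x', t) hp, hv0]
    have ht1 : ∀ x', pdx (pdt (Afun v)) (x', t) = Bfun (W 1) (x', t) := by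
      intro x'
      rw [pdx_line _ _ t ht0 x', hBx 0]
    have ht2 : ∀ x', pdx (pdx (pdt (Afun v))) (x', t) = Bfun (W 2) (x', t) := by
      intro x'
      rw [pdx_line _ _ t ht1 x', hBx 1]
    have ht3 : ∀ x', pdx (pdx (pdx (pdt (Afun v)))) (x', t) = Bfun (W 3) (x', t) := by
      intro x'
      rw [pdx_line _ _ t ht2 x', hBx 2]
    have ht4 : ∀ x', pdx (pdx (pdx (pdx (pdt (Afun v))))) (x', t) = Bfun (W 4) (x', t) := by
      intro x'
      rw [pdx_line _ _ t ht3 x', hBx 3]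
    show pdt (Afun v) (x, t) - pdx (pdx (pdt (Afun v))) (x, t)
        + pdx (pdx (pdx (pdx (pdt (Afun v))))) (x, t)
        + 3 * Afun v (x, t) * pdx (Afun v) (x, t)
        - 2 * pdx (Afun v) (x, t) * pdx (pdx (Afun v)) (x, t)
        - Afun v (x, t) * pdx (pdx (pdx (Afun v))) (x, t)
        + 2 * pdx (Afun v) (x, t) * pdx (pdx (pdx (pdx (Afun v)))) (x, t)
        + Afun v (x, t) * pdx (pdx (pdx (pdx (pdx (Afun v))))) (x, t) = _
    rw [hx5, hx4, hx3, hx2, hx1, ht4 x, ht2 x, ht0 x]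
    simp only [Afun, Bfun, hW, iteratedDeriv_zero]
    field_simp
    ring
  constructor
  · intro h y
    have := h (y, 1) one_pos
    rw [show (fun q : ℝ × ℝ => (1 / q.2) * v (q.1 - Real.log q.2)) = Afun v from rfl] at this
    rw [key (y, 1) one_ne_zero] at this
    simpa using this
  · intro h p hp
    rw [show (fun q : ℝ × ℝ => (1 / q.2) * v (q.1 - Real.log q.2)) = Afun v from rfl]
    rw [key p (ne_of_gt hp), h]
    ring
end
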